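/- Let a > 0, 0 < ν < 1, α₀ > 0, p* ≥ 0, Ste > 0, and α, β > 0. Set c = (1+α)/(a·(1+2β)), and define for ξ ≥ α₀ the function φ̃_c(ξ) = (a·α₀^ν·Ste/2)·exp(−((1+α)/(a·(1+β)))·(ξ² − α₀²)) / [1 + (α₀^ν·p*/(2·(1+β)))·exp(c·α₀²)·c^{(ν−1)/2}·(γ((1−ν)/2, c·ξ²) − γ((1−ν)/2, c·α₀²))], where γ(s,x) = ∫₀ˣ t^{s−1} e^{−t} dt is the lower incomplete gamma function. Then φ̃_c is strictly decreasing on [α₀, ∞) with φ̃_c(ξ) → 0 as ξ → +∞; moreover, if a·Ste > 2·α₀ then the equation φ̃_c(ξ) = ξ^{ν+1} has exactly one solution ξ ∈ (α₀, ∞). -/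

import Mathlib

/-!
`φ̃_c` is a strictly decreasing Gaussian factor divided by `1 + M (γ(s,cξ²) − γ(s,cα₀²))` with
`M ≥ 0`, a denominator that equals `1` at `α₀` and is nondecreasing because `γ(s,·)` integrates a
positive function. Hence `φ̃_c` is strictly decreasing and tends to `0`. Its value at `α₀` is
`a α₀^ν Ste / 2`, which exceeds `α₀^{ν+1}` exactly when `a Ste > 2 α₀`; as `ξ^{ν+1}` increases
without bound, the intermediate value theorem gives a crossing, unique by monotonicity.
-/

open Real Set Filter

/-- Lower incomplete gamma function `γ(s,x) = ∫₀ˣ t^{s−1} e^{−t} dt`. -/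
noncomputable def lowerGamma (s x : ℝ) : ℝ :=
  ∫ t in (0 : ℝ)..x, t ^ (s - 1) * Real.exp (-t)

/-- The free-boundary function `φ̃_c` for linear thermal coefficients and
convective boundary condition, where `c = (1+α)/(a·(1+2β))`. -/
noncomputable def phitc (a ν α₀ p Ste alpha beta ξ : ℝ) : ℝ :=
  (a * α₀ ^ ν * Ste / 2) *
      Real.exp (-((1 + alpha) / (a * (1 + beta))) * (ξ ^ 2 - α₀ ^ 2)) /
    (1 + (α₀ ^ ν * p / (2 * (1 + beta))) *
        Real.exp (((1 + alpha) / (a * (1 + 2 * beta))) * α₀ ^ 2) *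
        ((1 + alpha) / (a * (1 + 2 * beta))) ^ ((ν - 1) / 2) *
        (lowerGamma ((1 - ν) / 2) (((1 + alpha) / (a * (1 + 2 * beta))) * ξ ^ 2) -
          lowerGamma ((1 - ν) / 2) (((1 + alpha) / (a * (1 + 2 * beta))) * α₀ ^ 2)))

open MeasureTheory

section LowerGamma

variable {s : ℝ}

theorem integrableOn_lowerGamma_integrand (hs : 0 < s) (X : ℝ) :
    IntegrableOn (fun t : ℝ => t ^ (s - 1) * exp (-t)) (Ioc 0 X) :=
  ((GammaIntegral_convergent hs).mono_set Ioc_subset_Ioi_self).congr_fun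
    (fun _ _ => mul_comm _ _) measurableSet_Ioc

theorem intervalIntegrable_lowerGamma_integrand (hs : 0 < s) {x : ℝ} (hx : 0 ≤ x) :
    IntervalIntegrable (fun t : ℝ => t ^ (s - 1) * exp (-t)) volume 0 x := by
  rw [intervalIntegrable_iff, uIoc_of_le hx]
  exact integrableOn_lowerGamma_integrand hs x

theorem lowerGamma_monotoneOn (hs : 0 < s) : MonotoneOn (lowerGamma s) (Ici 0) := by
  intro x hx y hy hxy
  have hdiff : lowerGamma s y - lowerGamma s x = ∫ t in x..y, t ^ (s - 1) * exp (-t) :=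
    intervalIntegral.integral_interval_sub_left (intervalIntegrable_lowerGamma_integrand hs hy)
      (intervalIntegrable_lowerGamma_integrand hs hx)
  have hnonneg : 0 ≤ ∫ t in x..y, t ^ (s - 1) * exp (-t) :=
    intervalIntegral.integral_nonneg hxy fun t ht =>
      mul_nonneg (rpow_nonneg ((mem_Ici.1 hx).trans ht.1) _) (exp_pos _).le
  linarith

theorem lowerGamma_continuousOn (hs : 0 < s) : ContinuousOn (lowerGamma s) (Ici 0) := by
  intro x hx
  have hIcc : ContinuousOn (lowerGamma s) (Icc 0 (x + 1)) := by
    have hint : IntegrableOn (fun t : ℝ => t ^ (s - 1) * exp (-t)) (Icc 0 (x + 1)) := by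
      rw [integrableOn_Icc_iff_integrableOn_Ioc]
      exact integrableOn_lowerGamma_integrand hs _
    refine (intervalIntegral.continuousOn_primitive hint).congr fun y hy => ?_
    rw [lowerGamma, intervalIntegral.integral_of_le hy.1]
  refine (hIcc x ⟨hx, by linarith⟩).mono_of_mem_nhdsWithin ?_
  rw [← Ici_inter_Iic]
  exact inter_mem_nhdsWithin _ (Iic_mem_nhds (by linarith))

end LowerGamma

theorem existsUnique_eq_rpow_of_antitoneOn {f : ℝ → ℝ} {x₀ q : ℝ} (hx₀ : 0 ≤ x₀) (hq : 0 < q)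
    (hf : AntitoneOn f (Ici x₀)) (hcont : ContinuousOn f (Ici x₀)) (h₀ : x₀ ^ q < f x₀) :
    ∃! x, x ∈ Ioi x₀ ∧ f x = x ^ q := by
  set g : ℝ → ℝ := fun x => f x - x ^ q
  have hg : StrictAntiOn g (Ici x₀) := fun x hx y hy hxy => by
    have := rpow_lt_rpow (hx₀.trans hx) hxy hq
    linarith [hf hx hy hxy.le]
  obtain ⟨R, hR, hxR⟩ : ∃ R, f x₀ < R ^ q ∧ x₀ < R :=
    (((tendsto_rpow_atTop hq).eventually_gt_atTop (f x₀)).and (eventually_gt_atTop x₀)).exists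
  have hgR : g R < 0 := by linarith [hf self_mem_Ici hxR.le hxR.le]
  have hcont_g : ContinuousOn g (Icc x₀ R) :=
    (hcont.mono Icc_subset_Ici_self).sub <|
      continuousOn_id.rpow_const fun _ _ => Or.inr hq.le
  obtain ⟨x, hx, hgx⟩ := intermediate_value_Ioo' hxR.le hcont_g ⟨hgR, by simpa [g] using h₀⟩
  refine ⟨x, ⟨hx.1, sub_eq_zero.1 hgx⟩, fun y ⟨hy, hfy⟩ => hg.injOn (mem_Ici.2 hy.le)
    (mem_Ici.2 hx.1.le) ?_⟩
  rw [hgx]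
  exact sub_eq_zero.2 hfy

noncomputable def freeBoundaryDenom (M c s α₀ ξ : ℝ) : ℝ :=
  1 + M * (lowerGamma s (c * ξ ^ 2) - lowerGamma s (c * α₀ ^ 2))

noncomputable def freeBoundaryQuotient (A K M c s α₀ ξ : ℝ) : ℝ :=
  A * exp (-K * (ξ ^ 2 - α₀ ^ 2)) / freeBoundaryDenom M c s α₀ ξ

theorem phitc_eq_freeBoundaryQuotient (a ν α₀ p Ste alpha beta : ℝ) :
    phitc a ν α₀ p Ste alpha beta =
      freeBoundaryQuotient (a * α₀ ^ ν * Ste / 2) ((1 + alpha) / (a * (1 + beta)))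
        (α₀ ^ ν * p / (2 * (1 + beta)) * exp ((1 + alpha) / (a * (1 + 2 * beta)) * α₀ ^ 2) *
          ((1 + alpha) / (a * (1 + 2 * beta))) ^ ((ν - 1) / 2))
        ((1 + alpha) / (a * (1 + 2 * beta))) ((1 - ν) / 2) α₀ :=
  rfl

section FreeBoundaryQuotient

variable {A K M c s α₀ : ℝ}

theorem freeBoundaryDenom_monotoneOn (hM : 0 ≤ M) (hc : 0 ≤ c) (hs : 0 < s) (hα₀ : 0 ≤ α₀) :
    MonotoneOn (freeBoundaryDenom M c s α₀) (Ici α₀) := by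
  intro x hx y hy hxy
  have hsq : c * x ^ 2 ≤ c * y ^ 2 :=
    mul_le_mul_of_nonneg_left (pow_le_pow_left₀ (hα₀.trans hx) hxy 2) hc
  have := lowerGamma_monotoneOn hs (mem_Ici.2 (by positivity)) (mem_Ici.2 (by positivity)) hsq
  unfold freeBoundaryDenom
  gcongr

theorem one_le_freeBoundaryDenom (hM : 0 ≤ M) (hc : 0 ≤ c) (hs : 0 < s) (hα₀ : 0 ≤ α₀)
    {ξ : ℝ} (hξ : α₀ ≤ ξ) : 1 ≤ freeBoundaryDenom M c s α₀ ξ := by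
  simpa [freeBoundaryDenom] using freeBoundaryDenom_monotoneOn hM hc hs hα₀ self_mem_Ici hξ hξ

theorem freeBoundaryDenom_continuousOn (hc : 0 ≤ c) (hs : 0 < s) :
    ContinuousOn (freeBoundaryDenom M c s α₀) (Ici 0) := by
  have hγ : ContinuousOn (fun ξ : ℝ => lowerGamma s (c * ξ ^ 2)) (Ici 0) :=
    (lowerGamma_continuousOn hs).comp (by fun_prop) fun ξ _ => mem_Ici.2 (by positivity)
  exact continuousOn_const.add (continuousOn_const.mul (hγ.sub continuousOn_const))

theorem freeBoundaryQuotient_self : freeBoundaryQuotient A K M c s α₀ α₀ = A := by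
  simp [freeBoundaryQuotient, freeBoundaryDenom]

theorem freeBoundaryQuotient_strictAntiOn (hA : 0 < A) (hK : 0 < K) (hM : 0 ≤ M) (hc : 0 ≤ c)
    (hs : 0 < s) (hα₀ : 0 ≤ α₀) :
    StrictAntiOn (freeBoundaryQuotient A K M c s α₀) (Ici α₀) := by
  intro x hx y hy hxy
  have hexp : exp (-K * (y ^ 2 - α₀ ^ 2)) < exp (-K * (x ^ 2 - α₀ ^ 2)) := by
    have : x ^ 2 < y ^ 2 := pow_lt_pow_left₀ hxy (hα₀.trans hx) two_ne_zero
    exact exp_lt_exp.2 (by nlinarith)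
  have hDx := one_le_freeBoundaryDenom hM hc hs hα₀ hx
  have hDxy := freeBoundaryDenom_monotoneOn hM hc hs hα₀ hx hy hxy.le
  calc freeBoundaryQuotient A K M c s α₀ y
      ≤ A * exp (-K * (y ^ 2 - α₀ ^ 2)) / freeBoundaryDenom M c s α₀ x := by
        unfold freeBoundaryQuotient; gcongr
    _ < freeBoundaryQuotient A K M c s α₀ x := by
        unfold freeBoundaryQuotient; gcongr

theorem freeBoundaryQuotient_tendsto_zero (hK : 0 < K) (hM : 0 ≤ M) (hc : 0 ≤ c) (hs : 0 < s)
    (hα₀ : 0 ≤ α₀) : Tendsto (freeBoundaryQuotient A K M c s α₀) atTop (nhds 0) := by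
  have hexp : Tendsto (fun ξ : ℝ => |A| * exp (-K * (ξ ^ 2 - α₀ ^ 2))) atTop (nhds 0) := by
    have hexponent : Tendsto (fun ξ : ℝ => -K * (ξ ^ 2 - α₀ ^ 2)) atTop atBot :=
      (tendsto_atTop_add_const_right _ _ (tendsto_pow_atTop two_ne_zero)).const_mul_atTop_of_neg
        (neg_lt_zero.2 hK)
    simpa using (tendsto_exp_atBot.comp hexponent).const_mul |A|
  refine squeeze_zero_norm' ?_ hexp
  filter_upwards [eventually_ge_atTop α₀] with ξ hξ
  rw [freeBoundaryQuotient, norm_div, norm_mul, norm_of_nonneg (exp_pos _).le]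
  exact div_le_self (by positivity) <|
    (one_le_freeBoundaryDenom hM hc hs hα₀ hξ).trans (le_abs_self _)

theorem freeBoundaryQuotient_continuousOn (hM : 0 ≤ M) (hc : 0 ≤ c) (hs : 0 < s)
    (hα₀ : 0 ≤ α₀) : ContinuousOn (freeBoundaryQuotient A K M c s α₀) (Ici α₀) :=
  ContinuousOn.div (by fun_prop)
    ((freeBoundaryDenom_continuousOn hc hs).mono (Ici_subset_Ici.2 hα₀)) fun _ hξ =>
      (zero_lt_one.trans_le (one_le_freeBoundaryDenom hM hc hs hα₀ hξ)).ne'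

end FreeBoundaryQuotient

theorem stmt_17 (a ν α₀ p Ste alpha beta : ℝ)
    (ha : 0 < a) (hν0 : 0 < ν) (hν1 : ν < 1) (hα₀ : 0 < α₀)
    (hp : 0 ≤ p) (hSte : 0 < Ste) (halpha : 0 < alpha) (hbeta : 0 < beta) :
    StrictAntiOn (phitc a ν α₀ p Ste alpha beta) (Ici α₀) ∧
    Tendsto (phitc a ν α₀ p Ste alpha beta) atTop (nhds 0) ∧
    (2 * α₀ < a * Ste →
      ∃! ξ : ℝ, ξ ∈ Ioi α₀ ∧ phitc a ν α₀ p Ste alpha beta ξ = ξ ^ (ν + 1)) := by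
  set c := (1 + alpha) / (a * (1 + 2 * beta))
  have hc : 0 ≤ c := by positivity
  have hA : 0 < a * α₀ ^ ν * Ste / 2 := by positivity
  have hK : 0 < (1 + alpha) / (a * (1 + beta)) := by positivity
  have hM : 0 ≤ α₀ ^ ν * p / (2 * (1 + beta)) * exp (c * α₀ ^ 2) * c ^ ((ν - 1) / 2) := by
    positivity
  have hs : 0 < (1 - ν) / 2 := by linarith
  rw [phitc_eq_freeBoundaryQuotient]
  have hanti := freeBoundaryQuotient_strictAntiOn hA hK hM hc hs hα₀.le
  refine ⟨hanti, freeBoundaryQuotient_tendsto_zero hK hM hc hs hα₀.le, fun hSte₂ => ?_⟩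
  refine existsUnique_eq_rpow_of_antitoneOn hα₀.le (by linarith) hanti.antitoneOn
    (freeBoundaryQuotient_continuousOn hM hc hs hα₀.le) ?_
  rw [freeBoundaryQuotient_self, rpow_add_one hα₀.ne']
  have : 0 < α₀ ^ ν := by positivity
  nlinarith
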